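/- arXiv:2502.05631 — 2 statements merged into one kernel-verified Lean document; each statement's English description precedes it below -/
import Mathlib

section
/- For nondeterministic processes without inert τ-transitions (concrete processes), branching bisimilarity implies strong bisimilarity: if Ē and F̄ are concrete and Ē ≈_b F̄, then Ē ∼ F̄. -/
namespace NDB

/-- The minimal process language `E ::= 0 | α.E | E + E`. -/
inductive NE (Act : Type) : Type where
  | zero : NE Act
  | pre : Act → NE Act → NE Act
  | plus : NE Act → NE Act → NE Act

variable {Act : Type}

/-- The SOS transition relation. -/
inductive step : NE Act → Act → NE Act → Prop where
  | pre (α : Act) (E : NE Act) : step (.pre α E) α E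
  | left {E₁ E₂ : NE Act} {α : Act} {E' : NE Act} :
      step E₁ α E' → step (.plus E₁ E₂) α E'
  | right {E₁ E₂ : NE Act} {α : Act} {E' : NE Act} :
      step E₂ α E' → step (.plus E₁ E₂) α E'

variable (τ : Act)

/-- `E →(α) E'` : a transition, or a vacuous step when `α = τ`. -/
def opt (E : NE Act) (α : Act) (E' : NE Act) : Prop :=
  step E α E' ∨ (α = τ ∧ E' = E)

/-- `E ⟹ E'` : the reflexive-transitive closure of `→(τ)`. -/
def wk : NE Act → NE Act → Prop :=
  Relation.ReflTransGen (fun E E' => opt τ E τ E')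

/-- Branching bisimulation relations. -/
def IsBB (R : NE Act → NE Act → Prop) : Prop :=
  Symmetric R ∧ ∀ E F α E', R E F → step E α E' →
    ∃ F₁ F₂, wk τ F F₁ ∧ opt τ F₁ α F₂ ∧ R E F₁ ∧ R E' F₂

/-- Branching bisimilarity `≈_b`. -/
def bb (E F : NE Act) : Prop := ∃ R, IsBB τ R ∧ R E F

/-- Rooted branching bisimilarity `≈_rb`. -/
def rbb (E F : NE Act) : Prop :=
  (∀ α E', step E α E' → ∃ F', step F α F' ∧ bb τ E' F') ∧
  (∀ α F', step F α F' → ∃ E', step E α E' ∧ bb τ E' F')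

/-- Strong bisimulation relations. -/
def IsSB (R : NE Act → NE Act → Prop) : Prop :=
  Symmetric R ∧ ∀ E F α E', R E F → step E α E' →
    ∃ F', step F α F' ∧ R E' F'

/-- Strong bisimilarity `∼`. -/
def sb (E F : NE Act) : Prop := ∃ R, IsSB R ∧ R E F

/-- `reach E E'` : `E'` is a derivative of `E`. -/
def reach : NE Act → NE Act → Prop :=
  Relation.ReflTransGen (fun E E' => ∃ α, step E α E')

/-- A process is concrete iff no derivative has an inert `τ`-transition. -/
def Concrete (E : NE Act) : Prop :=
  ∀ E', reach E E' → ∀ E'', step E' τ E'' → ¬ bb τ E' E''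

/-- Provable equality in the theory `AX^b` (axioms A1–A4 and B). -/
inductive AXb (τ : Act) : NE Act → NE Act → Prop where
  | refl (E) : AXb τ E E
  | symm {E F} : AXb τ E F → AXb τ F E
  | trans {E F G} : AXb τ E F → AXb τ F G → AXb τ E G
  | congPre (α : Act) {E F} : AXb τ E F → AXb τ (.pre α E) (.pre α F)
  | congPlusL {E E' F} : AXb τ E E' → AXb τ (.plus E F) (.plus E' F)
  | congPlusR {E F F'} : AXb τ F F' → AXb τ (.plus E F) (.plus E F')
  | A1 (E F) : AXb τ (.plus E F) (.plus F E)
  | A2 (E F G) : AXb τ (.plus (.plus E F) G) (.plus E (.plus F G))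
  | A3 (E) : AXb τ (.plus E E) E
  | A4 (E) : AXb τ (.plus E .zero) E
  | B (α : Act) (E F) :
      AXb τ (.pre α (.plus F (.pre τ (.plus E F)))) (.pre α (.plus E F))

/-!
Branching bisimilarity is an equivalence with the stuttering property: a process lying on a
`τ`-path between two branching bisimilar processes is bisimilar to both. In a concrete process
`F` the first step of a `τ`-path `F ⟹ F₁` with `F ≈_b F₁` would therefore be inert, so the path
is empty. Hence when a transition `E →α E'` is matched by `F ⟹ F₁ →(α) F₂`, we get `F₁ = F`;
the step `F →(α) F₂` cannot be vacuous, since then `E →τ E'` would be inert. So the branching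
bisimilar pairs of concrete processes form a strong bisimulation.
-/

section

variable {τ}

theorem IsBB.exists_wk {R : NE Act → NE Act → Prop} (hR : IsBB τ R) {E F E₁ : NE Act}
    (hEF : R E F) (hw : wk τ E E₁) : ∃ F₁, wk τ F F₁ ∧ R E₁ F₁ := by
  induction hw with
  | refl => exact ⟨F, .refl, hEF⟩
  | tail _ hstep ih =>
    obtain ⟨F₁, hwF, hRF⟩ := ih
    rcases hstep with hs | ⟨-, rfl⟩
    · obtain ⟨G₁, G₂, hwG, hoG, -, hR₂⟩ := hR.2 _ _ _ _ hRF hs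
      exact ⟨G₂, (hwF.trans hwG).tail hoG, hR₂⟩
    · exact ⟨F₁, hwF, hRF⟩

variable (τ) in
theorem bb_refl (E : NE Act) : bb τ E E := by
  refine ⟨Eq, ⟨fun _ _ h => h.symm, ?_⟩, rfl⟩
  rintro E _ α E' rfl hs
  exact ⟨E, E', .refl, .inl hs, rfl, rfl⟩

theorem bb_symm {E F : NE Act} (h : bb τ E F) : bb τ F E :=
  let ⟨R, hR, hEF⟩ := h
  ⟨R, hR, hR.1 hEF⟩

variable (τ) in
theorem isBB_bb : IsBB τ (bb τ) := by
  refine ⟨fun _ _ => bb_symm, ?_⟩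
  rintro E F α E' ⟨R, hR, hEF⟩ hs
  obtain ⟨F₁, F₂, hw, ho, h₁, h₂⟩ := hR.2 _ _ _ _ hEF hs
  exact ⟨F₁, F₂, hw, ho, ⟨R, hR, h₁⟩, ⟨R, hR, h₂⟩⟩

theorem bb_trans {E F G : NE Act} (hEF : bb τ E F) (hFG : bb τ F G) : bb τ E G := by
  refine ⟨fun X Z => ∃ Y, bb τ X Y ∧ bb τ Y Z, ⟨?_, ?_⟩, F, hEF, hFG⟩
  · rintro X Z ⟨Y, hXY, hYZ⟩
    exact ⟨Y, bb_symm hYZ, bb_symm hXY⟩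
  · rintro X Z α X' ⟨Y, hXY, hYZ⟩ hs
    obtain ⟨Y₁, Y₂, hwY, hoY, hXY₁, hXY₂⟩ := (isBB_bb τ).2 _ _ _ _ hXY hs
    obtain ⟨Z₁, hwZ, hYZ₁⟩ := (isBB_bb τ).exists_wk hYZ hwY
    rcases hoY with hsY | ⟨rfl, rfl⟩
    · obtain ⟨Z₁', Z₂, hwZ', hoZ, hYZ₁', hYZ₂⟩ := (isBB_bb τ).2 _ _ _ _ hYZ₁ hsY
      exact ⟨Z₁', Z₂, hwZ.trans hwZ', hoZ, ⟨Y₁, hXY₁, hYZ₁'⟩, ⟨Y₂, hXY₂, hYZ₂⟩⟩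
    · exact ⟨Z₁, Z₁, hwZ, .inr ⟨rfl, rfl⟩, ⟨Y₂, hXY₁, hYZ₁⟩, ⟨Y₂, hXY₂, hYZ₁⟩⟩

theorem bb_of_wk_of_wk {P Q G : NE Act} (hPQ : bb τ P Q) (hPG : wk τ P G) (hGQ : wk τ G Q) :
    bb τ P G := by
  let OnPath : NE Act → Prop := fun X => wk τ P X ∧ wk τ X Q
  refine ⟨fun X Y => bb τ X Y ∨ (OnPath X ∧ bb τ P Y) ∨ (OnPath Y ∧ bb τ P X),
    ⟨?_, ?_⟩, .inr (.inr ⟨⟨hPG, hGQ⟩, bb_refl τ P⟩)⟩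
  · rintro X Y (h | h | h)
    · exact .inl (bb_symm h)
    · exact .inr (.inr h)
    · exact .inr (.inl h)
  · -- Every case is answered inside `bb`: a process on the path is simulated from `P`
    -- (which reaches it silently), one bisimilar to `P` is simulated via `Q`.
    rintro X Y α X' (hXY | ⟨⟨hPX, -⟩, hPY⟩ | ⟨⟨-, hYQ⟩, hPX⟩) hs
    · obtain ⟨Y₁, Y₂, hw, ho, h₁, h₂⟩ := (isBB_bb τ).2 _ _ _ _ hXY hs
      exact ⟨Y₁, Y₂, hw, ho, .inl h₁, .inl h₂⟩
    · obtain ⟨Y₀, hwY, hXY₀⟩ := (isBB_bb τ).exists_wk hPY hPX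
      obtain ⟨Y₁, Y₂, hw, ho, h₁, h₂⟩ := (isBB_bb τ).2 _ _ _ _ hXY₀ hs
      exact ⟨Y₁, Y₂, hwY.trans hw, ho, .inl h₁, .inl h₂⟩
    · have hXQ : bb τ X Q := bb_trans (bb_symm hPX) hPQ
      obtain ⟨Q₁, Q₂, hw, ho, h₁, h₂⟩ := (isBB_bb τ).2 _ _ _ _ hXQ hs
      exact ⟨Q₁, Q₂, hYQ.trans hw, ho, .inl h₁, .inl h₂⟩

theorem Concrete.of_step {E E' : NE Act} {α : Act} (hE : Concrete τ E) (hs : step E α E') :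
    Concrete τ E' := fun X hX =>
  hE X (.head ⟨α, hs⟩ hX)

theorem Concrete.not_bb_of_step {E E' : NE Act} (hE : Concrete τ E) (hs : step E τ E') :
    ¬ bb τ E E' :=
  hE E .refl E' hs

theorem Concrete.eq_of_wk_of_bb {F F₁ : NE Act} (hF : Concrete τ F) (hw : wk τ F F₁)
    (hb : bb τ F F₁) : F₁ = F := by
  suffices ∀ X, wk τ F X → wk τ X F₁ → X = F from this F₁ hw .refl
  intro X hFX
  induction hFX with
  | refl => exact fun _ => rfl
  | @tail Y X _ hYX ih =>
    intro hXF₁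
    obtain rfl : Y = F := ih (.head hYX hXF₁)
    rcases hYX with hs | ⟨-, rfl⟩
    · exact absurd (bb_of_wk_of_wk hb (.single (.inl hs)) hXF₁) (hF.not_bb_of_step hs)
    · rfl

theorem Concrete.exists_step_of_bb {E F E' : NE Act} {α : Act} (hE : Concrete τ E)
    (hF : Concrete τ F) (h : bb τ E F) (hs : step E α E') :
    ∃ F', step F α F' ∧ bb τ E' F' := by
  obtain ⟨F₁, F₂, hw, ho, hEF₁, hE'F₂⟩ := (isBB_bb τ).2 _ _ _ _ h hs
  obtain rfl : F₁ = F := hF.eq_of_wk_of_bb hw (bb_trans (bb_symm h) hEF₁)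
  rcases ho with hsF | ⟨rfl, rfl⟩
  · exact ⟨F₂, hsF, hE'F₂⟩
  · exact absurd (bb_trans h (bb_symm hE'F₂)) (hE.not_bb_of_step hs)

end

/-- For concrete processes, branching bisimilarity implies strong bisimilarity. -/
theorem statement9 {Act : Type} (τ : Act) {E F : NE Act}
    (hE : Concrete τ E) (hF : Concrete τ F) (h : bb τ E F) :
    sb E F := by
  refine ⟨fun X Y => Concrete τ X ∧ Concrete τ Y ∧ bb τ X Y, ⟨?_, ?_⟩, hE, hF, h⟩
  · rintro X Y ⟨hX, hY, hXY⟩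
    exact ⟨hY, hX, bb_symm hXY⟩
  · rintro X Y α X' ⟨hX, hY, hXY⟩ hs
    obtain ⟨Y', hsY, hX'Y'⟩ := hX.exists_step_of_bb hY hXY hs
    exact ⟨Y', hsY, hX.of_step hs, hY.of_step hsY, hX'Y'⟩

end NDB
end

section
/- In the minimal process language, for every process E there exists a concrete process Ē (having no inert τ-transitions in any derivative) such that E ≈_b Ē, and moreover the axiom system consisting of A1–A4 together with the branching axiom B proves α.E = α.Ē for every action α. -/
/-!
Normalise `E` summand by summand: below each prefix the body is replaced, inductively, by a
concrete equivalent that is provably equal under the prefix. The result `P` has concrete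
derivatives, so it can only fail to be concrete at the root, through an inert step `P →τ G`;
then `Ē := G`. Concrete branching bisimilar processes are strongly bisimilar, hence equal by
A1–A4. Consequently every summand `β.H` of `P` is either absorbed by `G` (`G + β.H = G`) or
equals `τ.G`, so `P = D + τ.G` with `G + D = G`, and B turns `α.(D + τ.(G + D))` into
`α.(G + D) = α.G`.
-/

namespace NDB

variable {Act : Type}

variable (τ : Act)

section

variable {τ : Act}

theorem sizeOf_lt_of_step {E E' : NE Act} {α : Act} (h : step E α E') : sizeOf E' < sizeOf E := by
  induction h <;> simp only [NE.pre.sizeOf_spec, NE.plus.sizeOf_spec] <;> omega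

theorem wellFounded_step : WellFounded (fun E' E : NE Act => ∃ α, step E α E') :=
  Subrelation.wf (fun ⟨_, hs⟩ => sizeOf_lt_of_step hs) (measure sizeOf).wf

namespace bb

theorem refl (E : NE Act) : bb τ E E :=
  ⟨Eq, ⟨fun _ _ h => h.symm, by
    rintro E F α E' rfl hs
    exact ⟨E, E', .refl, Or.inl hs, rfl, rfl⟩⟩, rfl⟩

theorem symm {E F : NE Act} (h : bb τ E F) : bb τ F E :=
  let ⟨R, hR, hEF⟩ := h
  ⟨R, hR, hR.1 hEF⟩

theorem exists_of_step {E F E' : NE Act} {α : Act} (h : bb τ E F) (hs : step E α E') :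
    ∃ F₁ F₂, wk τ F F₁ ∧ opt τ F₁ α F₂ ∧ bb τ E F₁ ∧ bb τ E' F₂ := by
  obtain ⟨R, hR, hEF⟩ := h
  obtain ⟨F₁, F₂, hw, hopt, h₁, h₂⟩ := hR.2 E F α E' hEF hs
  exact ⟨F₁, F₂, hw, hopt, ⟨R, hR, h₁⟩, ⟨R, hR, h₂⟩⟩

theorem exists_of_wk {E F E' : NE Act} (h : bb τ E F) (hw : wk τ E E') :
    ∃ F', wk τ F F' ∧ bb τ E' F' := by
  induction hw with
  | refl => exact ⟨F, .refl, h⟩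
  | tail _ hstep ih =>
    obtain ⟨F', hwF, hbb⟩ := ih
    rcases hstep with hs | ⟨-, rfl⟩
    · obtain ⟨F₁, F₂, hw₁, hopt, -, hb₂⟩ := hbb.exists_of_step hs
      rcases hopt with hs₂ | ⟨-, rfl⟩
      · exact ⟨F₂, (hwF.trans hw₁).tail (Or.inl hs₂), hb₂⟩
      · exact ⟨F₂, hwF.trans hw₁, hb₂⟩
    · exact ⟨F', hwF, hbb⟩

theorem trans {E F G : NE Act} (h₁ : bb τ E F) (h₂ : bb τ F G) : bb τ E G := by
  refine ⟨fun X Z => ∃ Y, bb τ X Y ∧ bb τ Y Z, ⟨?_, ?_⟩, F, h₁, h₂⟩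
  · rintro X Z ⟨Y, hXY, hYZ⟩
    exact ⟨Y, hYZ.symm, hXY.symm⟩
  · rintro X Z α X' ⟨Y, hXY, hYZ⟩ hs
    obtain ⟨Y₁, Y₂, hw, hopt, hXY₁, hX'Y₂⟩ := hXY.exists_of_step hs
    obtain ⟨Z₁, hwZ, hY₁Z₁⟩ := hYZ.exists_of_wk hw
    rcases hopt with hsY | ⟨hα, rfl⟩
    · obtain ⟨Z₂, Z₃, hw₂, hopt₂, hY₁Z₂, hY₂Z₃⟩ := hY₁Z₁.exists_of_step hsY
      exact ⟨Z₂, Z₃, hwZ.trans hw₂, hopt₂, ⟨Y₁, hXY₁, hY₁Z₂⟩, ⟨Y₂, hX'Y₂, hY₂Z₃⟩⟩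
    · exact ⟨Z₁, Z₁, hwZ, Or.inr ⟨hα, rfl⟩, ⟨Y₂, hXY₁, hY₁Z₁⟩, ⟨Y₂, hX'Y₂, hY₁Z₁⟩⟩

theorem stutter {E M F : NE Act} (hEF : bb τ E F) (h₁ : wk τ E M) (h₂ : wk τ M F) :
    bb τ E M := by
  refine ⟨fun X Y => bb τ X Y ∨ (wk τ Y X ∧ ∃ Z, wk τ X Z ∧ bb τ Y Z) ∨
      (wk τ X Y ∧ ∃ Z, wk τ Y Z ∧ bb τ X Z), ⟨?_, ?_⟩, Or.inr (Or.inr ⟨h₁, F, h₂, hEF⟩)⟩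
  · rintro X Y (h | h | h)
    · exact Or.inl h.symm
    · exact Or.inr (Or.inr h)
    · exact Or.inr (Or.inl h)
  · rintro X Y α X' (hXY | ⟨hYX, Z, hXZ, hYZ⟩ | ⟨hXY, Z, hYZ, hXZ⟩) hs
    · obtain ⟨F₁, F₂, hw, hopt, h₁, h₂⟩ := hXY.exists_of_step hs
      exact ⟨F₁, F₂, hw, hopt, Or.inl h₁, Or.inl h₂⟩
    · obtain ⟨Z', hwZ, hXZ'⟩ := hYZ.exists_of_wk hYX
      obtain ⟨F₁, F₂, hw, hopt, h₁, h₂⟩ := hXZ'.exists_of_step hs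
      exact ⟨F₁, F₂, ((hYX.trans hXZ).trans hwZ).trans hw, hopt, Or.inl h₁, Or.inl h₂⟩
    · obtain ⟨F₁, F₂, hw, hopt, h₁, h₂⟩ := hXZ.exists_of_step hs
      exact ⟨F₁, F₂, hYZ.trans hw, hopt, Or.inl h₁, Or.inl h₂⟩

end bb

namespace rbb

theorem refl (E : NE Act) : rbb τ E E :=
  ⟨fun _ E' hs => ⟨E', hs, bb.refl E'⟩, fun _ E' hs => ⟨E', hs, bb.refl E'⟩⟩

theorem bb {E F : NE Act} (h : rbb τ E F) : bb τ E F := by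
  refine ⟨fun A B => NDB.bb τ A B ∨ rbb τ A B ∨ rbb τ B A, ⟨?_, ?_⟩, Or.inr (Or.inl h)⟩
  · rintro A B (h | h | h)
    · exact Or.inl h.symm
    · exact Or.inr (Or.inr h)
    · exact Or.inr (Or.inl h)
  · rintro A B α A' (hAB | hAB | hBA) hs
    · obtain ⟨F₁, F₂, hw, hopt, h₁, h₂⟩ := hAB.exists_of_step hs
      exact ⟨F₁, F₂, hw, hopt, Or.inl h₁, Or.inl h₂⟩
    · obtain ⟨B', hsB, hb⟩ := hAB.1 α A' hs
      exact ⟨B, B', .refl, Or.inl hsB, Or.inr (Or.inl hAB), Or.inl hb⟩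
    · obtain ⟨B', hsB, hb⟩ := hBA.2 α A' hs
      exact ⟨B, B', .refl, Or.inl hsB, Or.inr (Or.inr hBA), Or.inl hb.symm⟩

theorem plus {E F G H : NE Act} (h₁ : rbb τ E F) (h₂ : rbb τ G H) :
    rbb τ (.plus E G) (.plus F H) := by
  constructor
  · intro α X hs
    cases hs with
    | left hs => obtain ⟨F', hs', hb⟩ := h₁.1 α X hs; exact ⟨F', .left hs', hb⟩
    | right hs => obtain ⟨H', hs', hb⟩ := h₂.1 α X hs; exact ⟨H', .right hs', hb⟩
  · intro α X hs
    cases hs with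
    | left hs => obtain ⟨E', hs', hb⟩ := h₁.2 α X hs; exact ⟨E', .left hs', hb⟩
    | right hs => obtain ⟨G', hs', hb⟩ := h₂.2 α X hs; exact ⟨G', .right hs', hb⟩

end rbb

theorem bb.rbb_pre {E F : NE Act} (h : bb τ E F) (α : Act) : rbb τ (.pre α E) (.pre α F) :=
  ⟨fun _ _ hs => by cases hs; exact ⟨F, .pre α F, h⟩,
    fun _ _ hs => by cases hs; exact ⟨E, .pre α E, h⟩⟩

namespace Concrete

theorem of_reach {E E' : NE Act} (h : Concrete τ E) (hr : reach E E') : Concrete τ E' :=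
  fun E'' hr' => h E'' (hr.trans hr')

theorem of_step_s10 {E E' : NE Act} {α : Act} (h : Concrete τ E) (hs : step E α E') :
    Concrete τ E' :=
  h.of_reach (.single ⟨α, hs⟩)

theorem of_forall_step {E : NE Act} (hder : ∀ β E', step E β E' → Concrete τ E')
    (hroot : ∀ E', step E τ E' → ¬ bb τ E E') : Concrete τ E := by
  intro E' hr E'' hs
  rcases hr.cases_head with rfl | ⟨M, ⟨β, hM⟩, hr'⟩
  · exact hroot E'' hs
  · exact hder β M hM E' hr' E'' hs

theorem eq_of_wk {G F : NE Act} (hG : Concrete τ G) (hw : wk τ G F) (hb : bb τ G F) : F = G := by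
  induction hw with
  | refl => rfl
  | @tail M F hGM hMF ih =>
    obtain rfl : M = G := ih (hb.stutter hGM (.single hMF))
    rcases hMF with hs | ⟨-, rfl⟩
    · exact absurd hb (hG M .refl F hs)
    · rfl

end Concrete

theorem bb.exists_opt_of_concrete {E F E' : NE Act} {α : Act} (h : bb τ E F)
    (hF : Concrete τ F) (hs : step E α E') : ∃ F', opt τ F α F' ∧ bb τ E' F' := by
  obtain ⟨F₁, F₂, hw, hopt, h₁, h₂⟩ := h.exists_of_step hs
  obtain rfl := hF.eq_of_wk hw (h.symm.trans h₁)
  exact ⟨F₂, hopt, h₂⟩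

theorem sb.symm {E F : NE Act} (h : sb E F) : sb F E :=
  let ⟨R, hR, hEF⟩ := h
  ⟨R, hR, hR.1 hEF⟩

theorem sb.exists_of_step {E F E' : NE Act} {α : Act} (h : sb E F) (hs : step E α E') :
    ∃ F', step F α F' ∧ sb E' F' := by
  obtain ⟨R, hR, hEF⟩ := h
  obtain ⟨F', hs', h'⟩ := hR.2 E F α E' hEF hs
  exact ⟨F', hs', ⟨R, hR, h'⟩⟩

theorem sb_of_bb {E F : NE Act} (h : bb τ E F) (hE : Concrete τ E) (hF : Concrete τ F) :
    sb E F := by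
  refine ⟨fun X Y => bb τ X Y ∧ Concrete τ X ∧ Concrete τ Y, ⟨?_, ?_⟩, h, hE, hF⟩
  · rintro X Y ⟨hXY, hX, hY⟩
    exact ⟨hXY.symm, hY, hX⟩
  · rintro X Y α X' ⟨hXY, hX, hY⟩ hs
    obtain ⟨Y', hs' | ⟨rfl, rfl⟩, hX'Y'⟩ := hXY.exists_opt_of_concrete hY hs
    · exact ⟨Y', hs', hX'Y', hX.of_step_s10 hs, hY.of_step_s10 hs'⟩
    · exact absurd (hXY.trans hX'Y'.symm) (hX X .refl X' hs)

namespace AXb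

instance : Trans (AXb τ) (AXb τ) (AXb τ) := ⟨AXb.trans⟩

theorem plus_congr {E E' F F' : NE Act} (h₁ : AXb τ E E') (h₂ : AXb τ F F') :
    AXb τ (.plus E F) (.plus E' F') :=
  (congPlusL h₁).trans (congPlusR h₂)

theorem plus_right_comm (E F G : NE Act) :
    AXb τ (.plus (.plus E F) G) (.plus (.plus E G) F) :=
  (A2 E F G).trans ((congPlusR (A1 F G)).trans (A2 E G F).symm)

theorem plus_plus_plus_comm (E F G H : NE Act) :
    AXb τ (.plus (.plus E F) (.plus G H)) (.plus (.plus E G) (.plus F H)) :=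
  (A2 _ G H).symm.trans ((congPlusL (plus_right_comm E F G)).trans (A2 _ F H))

theorem plus_plus_of_plus {G D₁ D₂ : NE Act} (h₁ : AXb τ (.plus G D₁) G)
    (h₂ : AXb τ (.plus G D₂) G) : AXb τ (.plus G (.plus D₁ D₂)) G :=
  (A2 G D₁ D₂).symm.trans ((congPlusL h₁).trans h₂)

theorem plus_pre_of_step {G G' : NE Act} {β : Act} (hs : step G β G') :
    AXb τ (.plus G (.pre β G')) G := by
  induction hs with
  | pre => exact A3 _
  | left _ ih => exact (plus_right_comm _ _ _).trans (congPlusL ih)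
  | right _ ih => exact (A2 _ _ _).trans (congPlusR ih)

theorem plus_pre_of_step_of_axb {G G' H : NE Act} {β : Act} (hs : step G β G')
    (h : AXb τ H G') : AXb τ (.plus G (.pre β H)) G :=
  (congPlusR (congPre β h)).trans (plus_pre_of_step hs)

theorem plus_of_forall_step {G : NE Act} :
    ∀ F : NE Act, (∀ β H, step F β H → AXb τ (.plus G (.pre β H)) G) → AXb τ (.plus G F) G
  | .zero, _ => A4 G
  | .pre β H, h => h β H (.pre β H)
  | .plus F₁ F₂, h => plus_plus_of_plus
      (plus_of_forall_step F₁ fun β H hs => h β H (.left hs))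
      (plus_of_forall_step F₂ fun β H hs => h β H (.right hs))

theorem of_sb {H K : NE Act} (h : sb H K) : AXb τ H K := by
  induction H using wellFounded_step.induction generalizing K with
  | _ H ih =>
    have hKH : AXb τ (.plus K H) K := plus_of_forall_step H fun β H' hs => by
      obtain ⟨K', hs', h'⟩ := h.exists_of_step hs
      exact plus_pre_of_step_of_axb hs' (ih H' ⟨β, hs⟩ h')
    have hHK : AXb τ (.plus H K) H := plus_of_forall_step K fun β K' hs => by
      obtain ⟨H', hs', h'⟩ := h.symm.exists_of_step hs
      exact plus_pre_of_step_of_axb hs' (ih H' ⟨β, hs'⟩ h'.symm).symm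
    exact hHK.symm.trans ((A1 H K).trans hKH)

/-- `D` collects the summands of `S` absorbed by `G`; the others are merged into `T`. -/
theorem exists_plus_of_forall_step {G T : NE Act} (S : NE Act)
    (h : ∀ β H, step S β H → AXb τ (.plus G (.pre β H)) G ∨ AXb τ (.pre β H) T) :
    ∃ D, AXb τ (.plus G D) G ∧ AXb τ (.plus S T) (.plus D T) := by
  induction S with
  | zero => exact ⟨.zero, A4 G, .refl _⟩
  | pre β H _ =>
    rcases h β H (.pre β H) with habs | hT
    · exact ⟨.pre β H, habs, .refl _⟩
    · exact ⟨.zero, A4 G, (congPlusL hT).trans ((A3 T).trans ((A4 T).symm.trans (A1 T _)))⟩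
  | plus S₁ S₂ ih₁ ih₂ =>
    obtain ⟨D₁, hG₁, hS₁⟩ := ih₁ fun β H hs => h β H (.left hs)
    obtain ⟨D₂, hG₂, hS₂⟩ := ih₂ fun β H hs => h β H (.right hs)
    refine ⟨.plus D₁ D₂, plus_plus_of_plus hG₁ hG₂, ?_⟩
    calc AXb τ (.plus (.plus S₁ S₂) T) (.plus (.plus S₁ S₂) (.plus T T)) := congPlusR (A3 T).symm
      AXb τ _ (.plus (.plus S₁ T) (.plus S₂ T)) := plus_plus_plus_comm _ _ _ _
      AXb τ _ (.plus (.plus D₁ T) (.plus D₂ T)) := plus_congr hS₁ hS₂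
      AXb τ _ (.plus (.plus D₁ D₂) (.plus T T)) := plus_plus_plus_comm _ _ _ _
      AXb τ _ (.plus (.plus D₁ D₂) T) := congPlusR (A3 T)

end AXb

theorem absorbs_or_eq_pre_of_bb {P G H : NE Act} {β : Act} (hPG : bb τ P G)
    (hG : Concrete τ G) (hs : step P β H) (hH : Concrete τ H) :
    AXb τ (.plus G (.pre β H)) G ∨ AXb τ (.pre β H) (.pre τ G) := by
  obtain ⟨G', hG' | ⟨rfl, rfl⟩, hHG'⟩ := hPG.exists_opt_of_concrete hG hs
  · exact Or.inl (AXb.plus_pre_of_step_of_axb hG' (.of_sb (sb_of_bb hHG' hH (hG.of_step_s10 hG'))))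
  · exact Or.inr (.congPre _ (.of_sb (sb_of_bb hHG' hH hG)))

theorem AXb.pre_of_inert_step {P G : NE Act} (hs : step P τ G) (hPG : bb τ P G)
    (hder : ∀ β H, step P β H → Concrete τ H) (α : Act) :
    AXb τ (.pre α P) (.pre α G) := by
  obtain ⟨D, hGD, hPD⟩ := exists_plus_of_forall_step (T := .pre τ G) P fun β H hH =>
    absorbs_or_eq_pre_of_bb hPG (hder τ G hs) hH (hder β H hH)
  calc AXb τ (.pre α P) (.pre α (.plus P (.pre τ G))) := congPre α (plus_pre_of_step hs).symm
    AXb τ _ (.pre α (.plus D (.pre τ G))) := congPre α hPD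
    AXb τ _ (.pre α (.plus D (.pre τ (.plus G D)))) := congPre α (congPlusR (congPre τ hGD.symm))
    AXb τ _ (.pre α (.plus G D)) := B α G D
    AXb τ _ (.pre α G) := congPre α hGD

theorem exists_concrete_of_forall_step {P : NE Act} (hder : ∀ β H, step P β H → Concrete τ H) :
    ∃ Pbar, Concrete τ Pbar ∧ bb τ P Pbar ∧ ∀ α, AXb τ (.pre α P) (.pre α Pbar) := by
  by_cases hinert : ∃ G, step P τ G ∧ bb τ P G
  · obtain ⟨G, hs, hPG⟩ := hinert
    exact ⟨G, hder τ G hs, hPG, AXb.pre_of_inert_step hs hPG hder⟩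
  · push Not at hinert
    exact ⟨P, Concrete.of_forall_step hder hinert, bb.refl P, fun α => .refl _⟩

theorem exists_forall_step_concrete (S : NE Act) :
    ∃ P, AXb τ S P ∧ rbb τ S P ∧ ∀ β H, step P β H → Concrete τ H := by
  induction S with
  | zero => exact ⟨.zero, .refl _, rbb.refl _, fun _ _ hs => nomatch hs⟩
  | pre α F ih =>
    obtain ⟨P, hFP, hrbb, hder⟩ := ih
    obtain ⟨Fbar, hc, hbb, hax⟩ := exists_concrete_of_forall_step hder
    refine ⟨.pre α Fbar, (AXb.congPre α hFP).trans (hax α), (hrbb.bb.trans hbb).rbb_pre α, ?_⟩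
    rintro β H ⟨⟩
    exact hc
  | plus S₁ S₂ ih₁ ih₂ =>
    obtain ⟨P₁, hS₁, hrbb₁, hder₁⟩ := ih₁
    obtain ⟨P₂, hS₂, hrbb₂, hder₂⟩ := ih₂
    refine ⟨.plus P₁ P₂, AXb.plus_congr hS₁ hS₂, hrbb₁.plus hrbb₂, ?_⟩
    intro β H hs
    cases hs with
    | left hs => exact hder₁ β H hs
    | right hs => exact hder₂ β H hs

end

/-- Every process is branching bisimilar to a concrete process, provably equal
under any prefix in `AX^b`. -/
theorem statement10 {Act : Type} (τ : Act) (E : NE Act) :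
    ∃ Ebar : NE Act, Concrete τ Ebar ∧ bb τ E Ebar ∧
      ∀ α : Act, AXb τ (.pre α E) (.pre α Ebar) := by
  obtain ⟨P, hEP, hrbb, hder⟩ := exists_forall_step_concrete (τ := τ) E
  obtain ⟨Ebar, hc, hbb, hax⟩ := exists_concrete_of_forall_step hder
  exact ⟨Ebar, hc, hrbb.bb.trans hbb, fun α => (AXb.congPre α hEP).trans (hax α)⟩

end NDB
end
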